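/- arXiv:1012.0093 — 7 statements merged into one kernel-verified Lean document; each statement's English description precedes it below -/
import Mathlib

section
/- Let ρ be a completely selfdecomposable distribution on ℝ^d with spectral measure Γ_ρ on (0,2), i.e., its Lévy measure is ν_ρ(B) = ∫_{(0,2)} Γ_ρ(dβ) ∫_S λ_β(dξ) ∫_0^∞ 1_B(rξ) r^{-β-1} dr. Then for α ∈ (0,2), ∫_{|x|>1} |x|^α ν_ρ(dx) < ∞ if and only if Γ_ρ((0,α]) = 0 and ∫_{(α,2)} (β-α)^{-1} Γ_ρ(dβ) < ∞. -/
/-!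
Disintegrating `ν` along `Γ`, the sphere family and the rays `r ↦ r • ξ` turns the integral
of `|x|^α` over `{|x| > 1}` into `∫ Γ(dβ) ∫_1^∞ r^{α-β-1} dr`. The inner integral is
`(β - α)⁻¹` for `β > α` and `∞` for `β ≤ α`, so the whole integral is finite exactly when
`Γ` does not charge `(0, α]` and `(β - α)⁻¹` is `Γ`-integrable on `(α, 2)`.
-/

open MeasureTheory Set ProbabilityTheory
open scoped ENNReal

lemma lintegral_Ioi_one_rpow (p : ℝ) :
    ∫⁻ r in Ioi (1:ℝ), ENNReal.ofReal (r ^ p) =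
      if p < -1 then ENNReal.ofReal ((-1 - p)⁻¹) else ⊤ := by
  have hnonneg : 0 ≤ᵐ[volume.restrict (Ioi (1:ℝ))] fun r : ℝ => r ^ p := by
    filter_upwards [ae_restrict_mem measurableSet_Ioi] with r hr
    exact Real.rpow_nonneg (zero_le_one.trans hr.le) p
  split_ifs with hp
  · rw [← ofReal_integral_eq_lintegral_ofReal (integrableOn_Ioi_rpow_of_lt hp one_pos) hnonneg,
      integral_Ioi_rpow_of_lt hp one_pos, Real.one_rpow, neg_div, ← div_neg, one_div]
    ring_nf
  · have hint : ¬ IntegrableOn (fun r : ℝ => r ^ p) (Ioi 1) := by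
      rwa [integrableOn_Ioi_rpow_iff one_pos]
    rw [IntegrableOn, Integrable, hasFiniteIntegral_iff_ofReal hnonneg] at hint
    simp only [not_and, not_lt, top_le_iff] at hint
    exact hint (measurable_id.pow_const p).aestronglyMeasurable

lemma exists_isFiniteKernel_eqOn {X E : Type*} [MeasurableSpace X] [MeasurableSpace E]
    {s : Set X} (hs : MeasurableSet s) {lam : X → Measure E}
    (hmeas : ∀ B, MeasurableSet B → Measurable fun x => lam x B)
    (hle : ∀ x ∈ s, lam x univ ≤ 1) :
    ∃ κ : Kernel X E, IsFiniteKernel κ ∧ ∀ x ∈ s, κ x = lam x := by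
  classical
  have hcoe : ∀ B x, s.indicator lam x B = s.indicator (fun x => lam x B) x := by
    intro B x
    by_cases hx : x ∈ s <;> simp [hx]
  refine ⟨⟨s.indicator lam, Measure.measurable_of_measurable_coe _ fun B hB => ?_⟩,
    ⟨1, ENNReal.one_lt_top, fun x => ?_⟩, fun x hx => indicator_of_mem hx lam⟩
  · simp_rw [hcoe]
    exact (hmeas B hB).indicator hs
  · by_cases hx : x ∈ s
    · simpa [hx] using hle x hx
    · simp [hx]

section PolarMeasure

variable {E : Type*} [MeasurableSpace E] [SMul ℝ E] [MeasurableSMul₂ ℝ E]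

noncomputable def rayMeasure (β : ℝ) (ξ : E) : Measure E :=
  ((volume.restrict (Ioi 0)).withDensity fun r => ENNReal.ofReal (r ^ (-β - 1))).map (· • ξ)

lemma lintegral_rayMeasure (β : ℝ) (ξ : E) {f : E → ℝ≥0∞} (hf : Measurable f) :
    ∫⁻ x, f x ∂rayMeasure β ξ = ∫⁻ r in Ioi 0, f (r • ξ) * ENNReal.ofReal (r ^ (-β - 1)) := by
  have hray : Measurable fun r : ℝ => r • ξ := by fun_prop
  rw [rayMeasure, lintegral_map hf hray,
    lintegral_withDensity_eq_lintegral_mul _ (by fun_prop)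
      (show Measurable fun r : ℝ => f (r • ξ) from hf.comp hray)]
  simp_rw [mul_comm]
  rfl

lemma rayMeasure_apply {β : ℝ} {ξ : E} {B : Set E} (hB : MeasurableSet B) :
    rayMeasure β ξ B = ∫⁻ r in Ioi 0,
      B.indicator (fun _ => (1:ℝ≥0∞)) (r • ξ) * ENNReal.ofReal (r ^ (-β - 1)) := by
  rw [← lintegral_indicator_one hB,
    lintegral_rayMeasure β ξ (f := B.indicator 1) (measurable_const.indicator hB)]
  rfl

lemma measurable_rayMeasure : Measurable fun p : ℝ × E => rayMeasure p.1 p.2 := by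
  refine Measure.measurable_of_measurable_coe _ fun B hB => ?_
  simp_rw [rayMeasure_apply hB]
  refine Measurable.lintegral_prod_right' (f := fun q : (ℝ × E) × ℝ =>
    B.indicator (fun _ => (1:ℝ≥0∞)) (q.2 • q.1.2) * ENNReal.ofReal (q.2 ^ (-q.1.1 - 1))) ?_
  exact ((measurable_const.indicator hB).comp (measurable_snd.smul measurable_fst.snd)).mul
    (by fun_prop)

noncomputable def polarMeasure (Γ : Measure ℝ) (κ : Kernel ℝ E) : Measure E :=
  Γ.bind fun β => (κ β).bind (rayMeasure β)

variable (Γ : Measure ℝ) (κ : Kernel ℝ E) [IsSFiniteKernel κ]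

lemma measurable_bind_rayMeasure : Measurable fun β => (κ β).bind (rayMeasure β) := by
  refine Measure.measurable_of_measurable_coe _ fun B hB => ?_
  have hbind : ∀ β, (κ β).bind (rayMeasure β) B = ∫⁻ ξ, rayMeasure β ξ B ∂κ β := fun β =>
    Measure.bind_apply hB (measurable_rayMeasure.comp measurable_prodMk_left).aemeasurable
  simp_rw [hbind]
  exact ((Measure.measurable_coe hB).comp measurable_rayMeasure).lintegral_kernel_prod_right'

lemma lintegral_polarMeasure {f : E → ℝ≥0∞} (hf : Measurable f) :
    ∫⁻ x, f x ∂polarMeasure Γ κ = ∫⁻ β, ∫⁻ ξ, ∫⁻ x, f x ∂rayMeasure β ξ ∂κ β ∂Γ := by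
  rw [polarMeasure, Measure.lintegral_bind (measurable_bind_rayMeasure κ).aemeasurable
    hf.aemeasurable]
  refine lintegral_congr fun β => ?_
  exact Measure.lintegral_bind (measurable_rayMeasure.comp measurable_prodMk_left).aemeasurable
    hf.aemeasurable

lemma polarMeasure_apply {B : Set E} (hB : MeasurableSet B) :
    polarMeasure Γ κ B = ∫⁻ β, (∫⁻ ξ, (∫⁻ r in Ioi (0:ℝ),
      B.indicator (fun _ => (1:ℝ≥0∞)) (r • ξ) * ENNReal.ofReal (r ^ (-β - 1))) ∂κ β) ∂Γ := by
  simp_rw [← lintegral_indicator_one hB,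
    lintegral_polarMeasure Γ κ (f := B.indicator 1) (measurable_const.indicator hB),
    lintegral_rayMeasure _ _ (f := B.indicator 1) (measurable_const.indicator hB)]
  rfl

end PolarMeasure

lemma lintegral_rayMeasure_indicator_norm_rpow {E : Type*} [NormedAddCommGroup E]
    [NormedSpace ℝ E] [MeasurableSpace E] [OpensMeasurableSpace E] [MeasurableSMul₂ ℝ E]
    (α β : ℝ) {ξ : E} (hξ : ‖ξ‖ = 1) :
    ∫⁻ x, {x : E | 1 < ‖x‖}.indicator (fun x => ENNReal.ofReal (‖x‖ ^ α)) x ∂rayMeasure β ξ =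
      if α < β then ENNReal.ofReal ((β - α)⁻¹) else ⊤ := by
  have hS : MeasurableSet {x : E | 1 < ‖x‖} := measurableSet_lt measurable_const measurable_norm
  have hintegrand : ∀ r ∈ Ioi (0:ℝ),
      {x : E | 1 < ‖x‖}.indicator (fun x => ENNReal.ofReal (‖x‖ ^ α)) (r • ξ) *
        ENNReal.ofReal (r ^ (-β - 1)) =
      (Ioi 1).indicator (fun r => ENNReal.ofReal (r ^ (α - β - 1))) r := by
    intro r (hr : 0 < r)
    have hnorm : ‖r • ξ‖ = r := by rw [norm_smul, hξ, mul_one, Real.norm_of_nonneg hr.le]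
    by_cases h1 : 1 < r
    · have hmem : r • ξ ∈ {x : E | 1 < ‖x‖} := show 1 < ‖r • ξ‖ by rwa [hnorm]
      rw [indicator_of_mem hmem, indicator_of_mem (mem_Ioi.mpr h1), hnorm,
        ← ENNReal.ofReal_mul (by positivity), ← Real.rpow_add hr]
      ring_nf
    · have hmem : r • ξ ∉ {x : E | 1 < ‖x‖} := show ¬1 < ‖r • ξ‖ by rwa [hnorm]
      rw [indicator_of_notMem hmem, indicator_of_notMem (mt mem_Ioi.mp h1), zero_mul]
  rw [lintegral_rayMeasure β ξ ((by fun_prop : Measurable _).indicator hS),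
    setLIntegral_congr_fun measurableSet_Ioi hintegrand, lintegral_indicator measurableSet_Ioi,
    Measure.restrict_restrict measurableSet_Ioi, Ioi_inter_Ioi, sup_of_le_left zero_le_one,
    lintegral_Ioi_one_rpow]
  by_cases hαβ : α < β
  · rw [if_pos (by linarith), if_pos hαβ, show -1 - (α - β - 1) = β - α by ring]
  · rw [if_neg (by linarith), if_neg hαβ]

lemma setLIntegral_Ioo_ite_top_lt_top_iff {Γ : Measure ℝ} {a α b : ℝ} (haα : a ≤ α)
    (hαb : α < b) (g : ℝ → ℝ≥0∞) :
    ∫⁻ β in Ioo a b, (if α < β then g β else ⊤) ∂Γ < ⊤ ↔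
      Γ (Ioc a α) = 0 ∧ ∫⁻ β in Ioo α b, g β ∂Γ < ⊤ := by
  rw [← Ioc_union_Ioo_eq_Ioo haα hαb,
    lintegral_union measurableSet_Ioo (Ioc_disjoint_Ioi_same.mono_right Ioo_subset_Ioi_self),
    setLIntegral_congr_fun measurableSet_Ioc fun β hβ => if_neg (not_lt.mpr hβ.2),
    setLIntegral_congr_fun measurableSet_Ioo fun β hβ => if_pos hβ.1, setLIntegral_const,
    ENNReal.add_lt_top]
  simp [ENNReal.mul_lt_top_iff]

theorem stmt2_general (d : ℕ) (α : ℝ) (hα : α ∈ Set.Ioo (0:ℝ) 2)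
    (Γ : Measure ℝ) (lam : ℝ → Measure (EuclideanSpace ℝ (Fin d)))
    (hprob : ∀ β ∈ Set.Ioo (0:ℝ) 2, IsProbabilityMeasure (lam β))
    (hsph : ∀ β ∈ Set.Ioo (0:ℝ) 2, lam β {ξ : EuclideanSpace ℝ (Fin d) | ‖ξ‖ = 1} = 1)
    (hmeas : ∀ B : Set (EuclideanSpace ℝ (Fin d)), MeasurableSet B →
      Measurable (fun β => lam β B))
    (ν : Measure (EuclideanSpace ℝ (Fin d)))
    (hν : ∀ B : Set (EuclideanSpace ℝ (Fin d)), MeasurableSet B →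
      ν B = ∫⁻ β in Set.Ioo (0:ℝ) 2,
        (∫⁻ ξ, (∫⁻ r in Set.Ioi (0:ℝ),
          Set.indicator B (fun _ => (1:ℝ≥0∞)) (r • ξ) * ENNReal.ofReal (r ^ (-β - 1)))
            ∂(lam β)) ∂Γ) :
    (∫⁻ x in {x : EuclideanSpace ℝ (Fin d) | 1 < ‖x‖}, ENNReal.ofReal (‖x‖ ^ α) ∂ν < ⊤) ↔
      (Γ (Set.Ioc 0 α) = 0 ∧ ∫⁻ β in Set.Ioo α 2, ENNReal.ofReal ((β - α)⁻¹) ∂Γ < ⊤) := by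
  -- `polarMeasure` needs an s-finite kernel, and off `(0, 2)` nothing is known about `lam`.
  obtain ⟨κ, hκ, hκlam⟩ := exists_isFiniteKernel_eqOn measurableSet_Ioo hmeas
    fun β hβ => (hprob β hβ).measure_univ.le
  have hν_polar : ν = polarMeasure (Γ.restrict (Ioo 0 2)) κ := by
    ext B hB
    rw [hν B hB, polarMeasure_apply _ _ hB]
    exact setLIntegral_congr_fun measurableSet_Ioo fun β hβ => by rw [hκlam β hβ]
  have hradial : ∀ β ∈ Ioo (0:ℝ) 2,
      ∫⁻ ξ, ∫⁻ x, {x | 1 < ‖x‖}.indicator (fun x => ENNReal.ofReal (‖x‖ ^ α)) x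
        ∂rayMeasure β ξ ∂κ β = if α < β then ENNReal.ofReal ((β - α)⁻¹) else ⊤ := by
    intro β hβ
    have := hprob β hβ
    have hsphere : ∀ᵐ ξ ∂lam β, ‖ξ‖ = 1 := by
      rw [ae_iff_measure_eq (measurableSet_eq_fun measurable_norm measurable_const).nullMeasurableSet,
        hsph β hβ, measure_univ]
    rw [hκlam β hβ, lintegral_congr_ae (hsphere.mono fun ξ hξ =>
      lintegral_rayMeasure_indicator_norm_rpow α β hξ), lintegral_const, measure_univ, mul_one]
  have hS : MeasurableSet {x : EuclideanSpace ℝ (Fin d) | 1 < ‖x‖} :=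
    measurableSet_lt measurable_const measurable_norm
  rw [← lintegral_indicator hS, hν_polar,
    lintegral_polarMeasure _ _ ((by fun_prop : Measurable _).indicator hS),
    setLIntegral_congr_fun measurableSet_Ioo hradial]
  exact setLIntegral_Ioo_ite_top_lt_top_iff hα.1.le hα.2 _

/-- Let `ν` be the Lévy measure of a completely selfdecomposable distribution, given in
polar form by a spectral measure `Γ` on `(0,2)` and a measurable family `lam` of probability
measures on the unit sphere.  For `α ∈ (0,2)`:
`∫_{|x|>1} |x|^α ν(dx) < ∞  ↔  Γ((0,α]) = 0 ∧ ∫_{(α,2)} (β-α)⁻¹ Γ(dβ) < ∞`. -/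
theorem stmt2 (d : ℕ) (α : ℝ) (hα : α ∈ Set.Ioo (0:ℝ) 2)
    (Γ : Measure ℝ) (lam : ℝ → Measure (EuclideanSpace ℝ (Fin d)))
    (hprob : ∀ β ∈ Set.Ioo (0:ℝ) 2, IsProbabilityMeasure (lam β))
    (hsph : ∀ β ∈ Set.Ioo (0:ℝ) 2, lam β {ξ : EuclideanSpace ℝ (Fin d) | ‖ξ‖ = 1} = 1)
    (hmeas : ∀ B : Set (EuclideanSpace ℝ (Fin d)), MeasurableSet B →
      Measurable (fun β => lam β B))
    (hΓ : ∫⁻ β in Set.Ioo (0:ℝ) 2, ENNReal.ofReal (β⁻¹ + (2 - β)⁻¹) ∂Γ < ⊤)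
    (ν : Measure (EuclideanSpace ℝ (Fin d)))
    (hν : ∀ B : Set (EuclideanSpace ℝ (Fin d)), MeasurableSet B →
      ν B = ∫⁻ β in Set.Ioo (0:ℝ) 2,
        (∫⁻ ξ, (∫⁻ r in Set.Ioi (0:ℝ),
          Set.indicator B (fun _ => (1:ℝ≥0∞)) (r • ξ) * ENNReal.ofReal (r ^ (-β - 1)))
            ∂(lam β)) ∂Γ) :
    (∫⁻ x in {x : EuclideanSpace ℝ (Fin d) | 1 < ‖x‖}, ENNReal.ofReal (‖x‖ ^ α) ∂ν < ⊤) ↔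
      (Γ (Set.Ioc 0 α) = 0 ∧ ∫⁻ β in Set.Ioo α 2, ENNReal.ofReal ((β - α)⁻¹) ∂Γ < ⊤) :=
  stmt2_general d α hα Γ lam hprob hsph hmeas ν hν
end

section
/- Let ν be a Lévy measure on ℝ^d of the form ν(B) = ∫_{(0,2)} Γ(dβ) ∫_S λ_β(dξ) ∫_0^∞ 1_B(rξ) r^{-β-1} dr. Then ∫_{|x|>1} log|x| ν(dx) < ∞ if and only if ∫_{(0,2)} β^{-2} Γ(dβ) < ∞. -/
open MeasureTheory Set
open scoped ENNReal

/-! Since every `λ_β` lives on the unit sphere, the radial density `r^(-β-1)` gives the tails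
`ν {‖x‖ > e^t} = ∫ e^(-βt) β⁻¹ Γ(dβ)`. By the layer-cake formula
`∫_{‖x‖>1} log ‖x‖ dν = ∫_0^∞ ν {‖x‖ > e^t} dt`, and Tonelli (legitimate because `Γ` is finite
on `(0,2)`) turns this into `∫ β⁻² Γ(dβ)`: the two integrals are in fact equal. -/

lemma lintegral_Ioi_rpow_neg_sub_one {β c : ℝ} (hβ : 0 < β) (hc : 0 < c) :
    ∫⁻ r in Ioi c, ENNReal.ofReal (r ^ (-β - 1)) = ENNReal.ofReal (c ^ (-β) / β) := by
  have hexp : -β - 1 < -1 := by linarith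
  rw [← ofReal_integral_eq_lintegral_ofReal (integrableOn_Ioi_rpow_of_lt hexp hc)
    ((ae_restrict_iff' measurableSet_Ioi).2 (ae_of_all _ fun r hr =>
      Real.rpow_nonneg (hc.trans hr).le _)), integral_Ioi_rpow_of_lt hexp hc]
  congr 1
  rw [show -β - 1 + 1 = -β by ring, neg_div_neg_eq]

lemma lintegral_Ioi_exp_neg_mul_div {β : ℝ} (hβ : 0 < β) :
    ∫⁻ t in Ioi (0:ℝ), ENNReal.ofReal (Real.exp (-β * t) / β) = ENNReal.ofReal ((β ^ 2)⁻¹) := by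
  have hneg : -β < 0 := neg_neg_of_pos hβ
  rw [← ofReal_integral_eq_lintegral_ofReal ((integrableOn_exp_mul_Ioi hneg 0).div_const β)
    (ae_of_all _ fun t => div_nonneg (Real.exp_nonneg _) hβ.le), integral_div,
    integral_exp_mul_Ioi hneg]
  congr 1
  field_simp
  simp

lemma lintegral_Ioi_indicator_lt_norm_smul {E : Type*} [NormedAddCommGroup E] [NormedSpace ℝ E]
    {ξ : E} (hξ : ‖ξ‖ = 1) {β c : ℝ} (hβ : 0 < β) (hc : 0 < c) :
    ∫⁻ r in Ioi (0:ℝ), {x : E | c < ‖x‖}.indicator (fun _ => (1:ℝ≥0∞)) (r • ξ) *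
      ENNReal.ofReal (r ^ (-β - 1)) = ENNReal.ofReal (c ^ (-β) / β) := by
  have hray : ∀ r ∈ Ioi (0:ℝ), {x : E | c < ‖x‖}.indicator (fun _ => (1:ℝ≥0∞)) (r • ξ) *
      ENNReal.ofReal (r ^ (-β - 1))
        = (Ioi c).indicator (fun r => ENNReal.ofReal (r ^ (-β - 1))) r := by
    intro r hr
    have hnorm : ‖r • ξ‖ = r := by rw [norm_smul, hξ, mul_one, Real.norm_of_nonneg (le_of_lt hr)]
    by_cases hcr : c < r <;> simp [indicator, hnorm, hcr]
  rw [setLIntegral_congr_fun measurableSet_Ioi hray, lintegral_indicator measurableSet_Ioi,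
    Measure.restrict_restrict measurableSet_Ioi,
    inter_eq_self_of_subset_left (Ioi_subset_Ioi hc.le), lintegral_Ioi_rpow_neg_sub_one hβ hc]

lemma lintegral_lintegral_Ioi_indicator_lt_norm_smul {E : Type*} [NormedAddCommGroup E]
    [NormedSpace ℝ E] [MeasurableSpace E] {μ : Measure E} [IsProbabilityMeasure μ]
    (hμ : ∀ᵐ ξ ∂μ, ‖ξ‖ = 1) {β c : ℝ} (hβ : 0 < β) (hc : 0 < c) :
    ∫⁻ ξ, (∫⁻ r in Ioi (0:ℝ), {x : E | c < ‖x‖}.indicator (fun _ => (1:ℝ≥0∞)) (r • ξ) *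
      ENNReal.ofReal (r ^ (-β - 1))) ∂μ = ENNReal.ofReal (c ^ (-β) / β) := by
  rw [lintegral_congr_ae (hμ.mono fun ξ hξ => lintegral_Ioi_indicator_lt_norm_smul hξ hβ hc),
    lintegral_const, measure_univ, mul_one]

lemma measure_lt_top_of_setLIntegral_lt_top {α : Type*} [MeasurableSpace α] {μ : Measure α}
    {s : Set α} {f : α → ℝ≥0∞} {a : ℝ≥0∞} (ha : a ≠ 0) (hs : MeasurableSet s)
    (hf : ∀ x ∈ s, a ≤ f x) (hfin : ∫⁻ x in s, f x ∂μ < ⊤) : μ s < ⊤ := by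
  refine ENNReal.lt_top_of_mul_ne_top_right ?_ ha
  rw [← setLIntegral_const]
  exact ((setLIntegral_mono' hs hf).trans_lt hfin).ne

lemma setLIntegral_log_norm_eq_lintegral_measure_exp_lt {E : Type*} [NormedAddCommGroup E]
    [MeasurableSpace E] [OpensMeasurableSpace E] (ν : Measure E) :
    ∫⁻ x in {x : E | 1 < ‖x‖}, ENNReal.ofReal (Real.log ‖x‖) ∂ν
      = ∫⁻ t in Ioi (0:ℝ), ν {x | Real.exp t < ‖x‖} := by
  have hA : MeasurableSet {x : E | 1 < ‖x‖} := measurableSet_lt measurable_const measurable_norm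
  rw [lintegral_eq_lintegral_meas_lt _
    ((ae_restrict_iff' hA).2 (ae_of_all _ fun x hx => Real.log_nonneg (le_of_lt hx)))
    (Real.measurable_log.comp measurable_norm).aemeasurable]
  refine setLIntegral_congr_fun measurableSet_Ioi fun t ht => ?_
  have hm : MeasurableSet {x : E | t < Real.log ‖x‖} :=
    measurableSet_lt measurable_const (by fun_prop)
  rw [Measure.restrict_apply hm]
  congr 1
  ext x
  simp only [mem_inter_iff, mem_ofPred_eq]
  have h1 : 1 < Real.exp t := Real.one_lt_exp_iff.2 ht
  constructor
  · rintro ⟨hlog, hx⟩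
    exact (Real.lt_log_iff_exp_lt (by linarith)).1 hlog
  · intro hx
    exact ⟨(Real.lt_log_iff_exp_lt (by linarith)).2 hx, h1.trans hx⟩

lemma measure_lt_norm_eq_of_polar {E : Type*} [NormedAddCommGroup E] [NormedSpace ℝ E]
    [MeasurableSpace E] [OpensMeasurableSpace E] {Γ : Measure ℝ} {s : Set ℝ}
    (hs : MeasurableSet s) (hs_pos : s ⊆ Ioi 0) {lam : ℝ → Measure E}
    (hprob : ∀ β ∈ s, IsProbabilityMeasure (lam β)) (hsph : ∀ β ∈ s, ∀ᵐ ξ ∂lam β, ‖ξ‖ = 1)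
    {ν : Measure E} (hν : ∀ B : Set E, MeasurableSet B →
      ν B = ∫⁻ β in s, (∫⁻ ξ, (∫⁻ r in Ioi (0:ℝ),
        B.indicator (fun _ => (1:ℝ≥0∞)) (r • ξ) * ENNReal.ofReal (r ^ (-β - 1))) ∂(lam β)) ∂Γ)
    {c : ℝ} (hc : 0 < c) :
    ν {x | c < ‖x‖} = ∫⁻ β in s, ENNReal.ofReal (c ^ (-β) / β) ∂Γ := by
  rw [hν _ (measurableSet_lt measurable_const measurable_norm)]
  refine setLIntegral_congr_fun hs fun β hβ => ?_
  have := hprob β hβ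
  exact lintegral_lintegral_Ioi_indicator_lt_norm_smul (hsph β hβ) (hs_pos hβ) hc

theorem stmt3_general (d : ℕ)
    (Γ : Measure ℝ) (lam : ℝ → Measure (EuclideanSpace ℝ (Fin d)))
    (hprob : ∀ β ∈ Set.Ioo (0:ℝ) 2, IsProbabilityMeasure (lam β))
    (hsph : ∀ β ∈ Set.Ioo (0:ℝ) 2, lam β {ξ : EuclideanSpace ℝ (Fin d) | ‖ξ‖ = 1} = 1)
    (hΓ : ∫⁻ β in Set.Ioo (0:ℝ) 2, ENNReal.ofReal (β⁻¹ + (2 - β)⁻¹) ∂Γ < ⊤)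
    (ν : Measure (EuclideanSpace ℝ (Fin d)))
    (hν : ∀ B : Set (EuclideanSpace ℝ (Fin d)), MeasurableSet B →
      ν B = ∫⁻ β in Set.Ioo (0:ℝ) 2,
        (∫⁻ ξ, (∫⁻ r in Set.Ioi (0:ℝ),
          Set.indicator B (fun _ => (1:ℝ≥0∞)) (r • ξ) * ENNReal.ofReal (r ^ (-β - 1)))
            ∂(lam β)) ∂Γ) :
    (∫⁻ x in {x : EuclideanSpace ℝ (Fin d) | 1 < ‖x‖},
        ENNReal.ofReal (Real.log ‖x‖) ∂ν < ⊤) ↔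
      ∫⁻ β in Set.Ioo (0:ℝ) 2, ENNReal.ofReal ((β ^ 2)⁻¹) ∂Γ < ⊤ := by
  have hsph_ae : ∀ β ∈ Ioo (0:ℝ) 2, ∀ᵐ ξ ∂lam β, ‖ξ‖ = 1 := fun β hβ =>
    haveI := hprob β hβ
    (mem_ae_iff_prob_eq_one (isClosed_eq continuous_norm continuous_const).measurableSet).2
      (hsph β hβ)
  have htail (t : ℝ) : ν {x | Real.exp t < ‖x‖}
      = ∫⁻ β in Ioo (0:ℝ) 2, ENNReal.ofReal (Real.exp (-β * t) / β) ∂Γ := by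
    simp_rw [measure_lt_norm_eq_of_polar measurableSet_Ioo (fun β hβ => hβ.1) hprob hsph_ae hν
      (Real.exp_pos t), ← Real.exp_mul, mul_comm t]
  have hone : ∀ β ∈ Ioo (0:ℝ) 2, 1 ≤ ENNReal.ofReal (β⁻¹ + (2 - β)⁻¹) := fun β ⟨h0, h2⟩ => by
    have : (2:ℝ)⁻¹ ≤ β⁻¹ := inv_anti₀ h0 h2.le
    have : (2:ℝ)⁻¹ ≤ (2 - β)⁻¹ := inv_anti₀ (by linarith) (by linarith)
    exact ENNReal.one_le_ofReal.2 (by linarith)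
  have : IsFiniteMeasure (Γ.restrict (Ioo 0 2)) := ⟨by
    rw [Measure.restrict_apply_univ]
    exact measure_lt_top_of_setLIntegral_lt_top one_ne_zero measurableSet_Ioo hone hΓ⟩
  rw [setLIntegral_log_norm_eq_lintegral_measure_exp_lt, lintegral_congr htail,
    lintegral_lintegral_swap (by fun_prop),
    setLIntegral_congr_fun measurableSet_Ioo fun β hβ => lintegral_Ioi_exp_neg_mul_div hβ.1]

/-- Let `ν` be a Lévy measure in completely-selfdecomposable polar form with spectral
measure `Γ` on `(0,2)`.  Then `∫_{|x|>1} log|x| ν(dx) < ∞ ↔ ∫_{(0,2)} β⁻² Γ(dβ) < ∞`. -/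
theorem stmt3 (d : ℕ)
    (Γ : Measure ℝ) (lam : ℝ → Measure (EuclideanSpace ℝ (Fin d)))
    (hprob : ∀ β ∈ Set.Ioo (0:ℝ) 2, IsProbabilityMeasure (lam β))
    (hsph : ∀ β ∈ Set.Ioo (0:ℝ) 2, lam β {ξ : EuclideanSpace ℝ (Fin d) | ‖ξ‖ = 1} = 1)
    (hmeas : ∀ B : Set (EuclideanSpace ℝ (Fin d)), MeasurableSet B →
      Measurable (fun β => lam β B))
    (hΓ : ∫⁻ β in Set.Ioo (0:ℝ) 2, ENNReal.ofReal (β⁻¹ + (2 - β)⁻¹) ∂Γ < ⊤)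
    (ν : Measure (EuclideanSpace ℝ (Fin d)))
    (hν : ∀ B : Set (EuclideanSpace ℝ (Fin d)), MeasurableSet B →
      ν B = ∫⁻ β in Set.Ioo (0:ℝ) 2,
        (∫⁻ ξ, (∫⁻ r in Set.Ioi (0:ℝ),
          Set.indicator B (fun _ => (1:ℝ≥0∞)) (r • ξ) * ENNReal.ofReal (r ^ (-β - 1)))
            ∂(lam β)) ∂Γ) :
    (∫⁻ x in {x : EuclideanSpace ℝ (Fin d) | 1 < ‖x‖},
        ENNReal.ofReal (Real.log ‖x‖) ∂ν < ⊤) ↔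
      ∫⁻ β in Set.Ioo (0:ℝ) 2, ENNReal.ofReal ((β ^ 2)⁻¹) ∂Γ < ⊤ :=
  stmt3_general d Γ lam hprob hsph hΓ ν hν
end

section
/- Let α < 0 and f_α be the inverse function of s = ∫_t^∞ u^{-α-1} e^{-u} du (with f_α(s) = 0 for s beyond the total mass). Then ∫_0^∞ f_α(s) ds = Γ(1-α) and ∫_0^∞ f_α(s)² ds = Γ(2-α), where Γ denotes the Gamma function. -/
open MeasureTheory Set Filter Topology

/-!
Write `g(t) = ∫_t^∞ u^{a-1} e^{-u} du` with `a = -α > 0`. On `(0, ∞)` the function `g` is a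
strictly decreasing bijection onto `(0, Γ(a))` with `g' = -u^{a-1} e^{-u}`, and `f` vanishes on
`[Γ(a), ∞)`, so the substitution `s = g(t)` gives
`∫_0^∞ f(s)^p ds = ∫_0^∞ t^p t^{a-1} e^{-t} dt = Γ(a + p)` for every `p ≥ 1`.
-/

section IntegralIoi

variable {E : Type*} [NormedAddCommGroup E] [NormedSpace ℝ E] {f : ℝ → E} {a : ℝ}

theorem integral_Ioi_eq_sub_intervalIntegral (hf : IntegrableOn f (Ioi a)) {t : ℝ}
    (ht : a ≤ t) :
    ∫ u in Ioi t, f u = (∫ u in Ioi a, f u) - ∫ u in a..t, f u := by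
  rw [← intervalIntegral.integral_Ioi_sub_Ioi hf ht, sub_sub_cancel]

theorem continuousOn_integral_Ioi [CompleteSpace E] (hf : IntegrableOn f (Ioi a)) :
    ContinuousOn (fun t => ∫ u in Ioi t, f u) (Ici a) := by
  have hcont : ContinuousOn
      (fun t => (∫ u in Ioi a, f u) - ∫ u in a..t, (Ioi a).indicator f u) (Ici a) :=
    (continuous_const.sub (intervalIntegral.continuous_primitive (fun _ _ =>
      ((integrable_indicator_iff measurableSet_Ioi).2 hf).intervalIntegrable) a)).continuousOn
  refine hcont.congr fun t (ht : a ≤ t) => ?_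
  beta_reduce
  rw [integral_Ioi_eq_sub_intervalIntegral hf ht, intervalIntegral.integral_of_le ht,
    intervalIntegral.integral_of_le ht]
  congr 1
  exact setIntegral_congr_fun measurableSet_Ioc fun u hu => (indicator_of_mem hu.1 f).symm

theorem hasDerivAt_integral_Ioi [CompleteSpace E] (hf : IntegrableOn f (Ioi a)) {x : ℝ}
    (hx : a < x) (hfx : ContinuousAt f x) : HasDerivAt (fun t => ∫ u in Ioi t, f u) (-f x) x := by
  have hprim : HasDerivAt (fun t => ∫ u in a..t, f u) (f x) x :=
    intervalIntegral.integral_hasDerivAt_right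
      ((intervalIntegrable_iff_integrableOn_Ioc_of_le hx.le).2 (hf.mono_set Ioc_subset_Ioi_self))
      ⟨Ioi a, Ioi_mem_nhds hx, hf.aestronglyMeasurable⟩ hfx
  refine (hprim.const_sub (∫ u in Ioi a, f u)).congr_of_eventuallyEq ?_
  filter_upwards [Ioi_mem_nhds hx] with t ht
  exact integral_Ioi_eq_sub_intervalIntegral hf ht.le

end IntegralIoi

noncomputable def upperIncompleteGamma (a t : ℝ) : ℝ :=
  ∫ u in Ioi t, u ^ (a - 1) * Real.exp (-u)

section UpperIncompleteGamma

variable {a : ℝ}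

theorem integrableOn_rpow_mul_exp_neg (ha : 0 < a) :
    IntegrableOn (fun u : ℝ => u ^ (a - 1) * Real.exp (-u)) (Ioi 0) := by
  simpa only [mul_comm] using Real.GammaIntegral_convergent ha

theorem upperIncompleteGamma_zero (ha : 0 < a) : upperIncompleteGamma a 0 = Real.Gamma a := by
  simp only [upperIncompleteGamma, Real.Gamma_eq_integral ha, mul_comm]

theorem tendsto_upperIncompleteGamma_atTop (a : ℝ) :
    Tendsto (upperIncompleteGamma a) atTop (𝓝 0) :=
  tendsto_integral_Ioi_zero tendsto_id

theorem continuousOn_upperIncompleteGamma (ha : 0 < a) :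
    ContinuousOn (upperIncompleteGamma a) (Ici 0) :=
  continuousOn_integral_Ioi (integrableOn_rpow_mul_exp_neg ha)

theorem hasDerivAt_upperIncompleteGamma (ha : 0 < a) {t : ℝ} (ht : 0 < t) :
    HasDerivAt (upperIncompleteGamma a) (-(t ^ (a - 1) * Real.exp (-t))) t :=
  hasDerivAt_integral_Ioi (integrableOn_rpow_mul_exp_neg ha) ht
    ((Real.continuousAt_rpow_const _ _ (Or.inl ht.ne')).mul (by fun_prop))

theorem strictAntiOn_upperIncompleteGamma (ha : 0 < a) :
    StrictAntiOn (upperIncompleteGamma a) (Ici 0) := by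
  refine strictAntiOn_of_deriv_neg (convex_Ici 0) (continuousOn_upperIncompleteGamma ha)
    fun t ht => ?_
  rw [interior_Ici] at ht
  rw [(hasDerivAt_upperIncompleteGamma ha ht).deriv, neg_lt_zero]
  exact mul_pos (Real.rpow_pos_of_pos ht _) (Real.exp_pos _)

theorem image_upperIncompleteGamma_Ioi (ha : 0 < a) :
    upperIncompleteGamma a '' Ioi 0 = Ioo 0 (Real.Gamma a) := by
  have hanti := strictAntiOn_upperIncompleteGamma ha
  rw [← upperIncompleteGamma_zero ha]
  apply Subset.antisymm
  · rintro _ ⟨t, ht : 0 < t, rfl⟩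
    have ht₀ : t ∈ Ici (0 : ℝ) := ht.le
    have ht₁ : t + 1 ∈ Ici (0 : ℝ) := by rw [mem_Ici]; linarith
    refine ⟨?_, hanti self_mem_Ici ht₀ ht⟩
    have hnonneg : 0 ≤ upperIncompleteGamma a (t + 1) :=
      le_of_tendsto (tendsto_upperIncompleteGamma_atTop a) <|
        eventually_ge_atTop (t + 1) |>.mono fun s hs =>
          hanti.antitoneOn ht₁ (ht₁.trans hs) hs
    exact hnonneg.trans_lt (hanti ht₀ ht₁ (lt_add_one t))
  · intro s hs
    obtain ⟨t, ht, rfl⟩ := isPreconnected_Ici.intermediate_value_Ioo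
      (le_principal_iff.2 (Ici_mem_atTop 0)) ((pure_le_principal _).2 self_mem_Ici)
      (continuousOn_upperIncompleteGamma ha) (tendsto_upperIncompleteGamma_atTop a)
      (tendsto_pure_nhds _ _) hs
    rcases (mem_Ici.1 ht).eq_or_lt with rfl | hpos
    · exact absurd hs.2 (lt_irrefl _)
    · exact mem_image_of_mem _ hpos

end UpperIncompleteGamma

section Moments

variable {a : ℝ}

theorem integral_rpow_mul_exp_neg_mul_pow (ha : 0 < a) (p : ℕ) :
    ∫ t in Ioi 0, t ^ (a - 1) * Real.exp (-t) * t ^ p = Real.Gamma (a + p) := by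
  rw [Real.Gamma_eq_integral (by positivity)]
  refine setIntegral_congr_fun measurableSet_Ioi fun t (ht : 0 < t) => ?_
  rw [show a + p - 1 = (a - 1) + p by ring, Real.rpow_add ht, Real.rpow_natCast]
  ring

theorem integral_comp_of_leftInverse_upperIncompleteGamma {E : Type*} [NormedAddCommGroup E]
    [NormedSpace ℝ E] (ha : 0 < a) {f : ℝ → ℝ}
    (hf : ∀ t, 0 < t → f (upperIncompleteGamma a t) = t) (φ : ℝ → E) :
    ∫ s in Ioo 0 (Real.Gamma a), φ (f s) =
      ∫ t in Ioi 0, (t ^ (a - 1) * Real.exp (-t)) • φ t := by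
  rw [← image_upperIncompleteGamma_Ioi ha,
    integral_image_eq_integral_deriv_smul_of_antitoneOn measurableSet_Ioi
      (fun t ht => (hasDerivAt_upperIncompleteGamma ha ht).hasDerivWithinAt)
      ((strictAntiOn_upperIncompleteGamma ha).antitoneOn.mono Ioi_subset_Ici_self)]
  refine setIntegral_congr_fun measurableSet_Ioi fun t ht => ?_
  rw [neg_neg, hf t ht]

theorem integral_pow_of_leftInverse_upperIncompleteGamma (ha : 0 < a) {f : ℝ → ℝ}
    (hf : ∀ t, 0 < t → f (upperIncompleteGamma a t) = t)
    (hf0 : ∀ s, Real.Gamma a ≤ s → f s = 0) {p : ℕ} (hp : p ≠ 0) :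
    ∫ s in Ioi 0, f s ^ p = Real.Gamma (a + p) := by
  have hvanish : ∀ s ∈ Ioi 0 \ Ioo 0 (Real.Gamma a), f s ^ p = 0 := fun s hs => by
    rw [hf0 s (not_lt.1 fun h => hs.2 ⟨hs.1, h⟩), zero_pow hp]
  rw [setIntegral_eq_of_subset_of_forall_sdiff_eq_zero measurableSet_Ioi Ioo_subset_Ioi_self
      hvanish, integral_comp_of_leftInverse_upperIncompleteGamma ha hf (· ^ p)]
  simpa only [smul_eq_mul] using integral_rpow_mul_exp_neg_mul_pow ha p

end Moments

/-- Let `α < 0` and let `f` be the inverse function of `s = g_α(t) = ∫_t^∞ u^{-α-1}e^{-u} du`,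
extended by `0` on `[Γ(-α), ∞)`.  Then `∫_0^∞ f(s) ds = Γ(1-α)` and
`∫_0^∞ f(s)² ds = Γ(2-α)`. -/
theorem stmt4 (α : ℝ) (hα : α < 0) (f : ℝ → ℝ)
    (hf : ∀ t : ℝ, 0 < t →
      f (∫ u in Set.Ioi t, u ^ (-α - 1) * Real.exp (-u)) = t)
    (hf0 : ∀ s : ℝ, Real.Gamma (-α) ≤ s → f s = 0) :
    (∫ s in Set.Ioi (0:ℝ), f s) = Real.Gamma (1 - α) ∧
      (∫ s in Set.Ioi (0:ℝ), (f s) ^ 2) = Real.Gamma (2 - α) := by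
  have ha : 0 < -α := neg_pos.2 hα
  have h1 := integral_pow_of_leftInverse_upperIncompleteGamma ha hf hf0 one_ne_zero
  have h2 := integral_pow_of_leftInverse_upperIncompleteGamma ha hf hf0 two_ne_zero
  push_cast [neg_add_eq_sub, pow_one] at h1 h2
  exact ⟨h1, h2⟩
end

section
/- Let α < 0 and let ν_ρ be a Lévy measure with polar decomposition ν_ρ(B) = ∫_{(0,2)} Γ_ρ(dβ) ∫_S λ_β(dξ) ∫_0^∞ 1_B(rξ) r^{-β-1} dr. Define μ's Lévy measure by ν_μ(B) = ∫_0^∞ t^{-α-1} e^{-t} dt ∫_{ℝ^d} 1_B(tx) ν_ρ(dx). Then ν_μ(B) = ∫_{(0,2)} Γ(β-α) Γ_ρ(dβ) ∫_S λ_β(dξ) ∫_0^∞ 1_B(uξ) u^{-β-1} du, where Γ is the Gamma function. -/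
open MeasureTheory Set Function ProbabilityTheory
open scoped ENNReal

/-!
Substituting the polar form of `ν`, the radial integral of the dilated set `t⁻¹B` is `t ^ β`
times that of `B` (change of variables `r ↦ t r`). Once Tonelli exchanges the `t`- and
`β`-integrals, the `t`-integral is `∫₀^∞ t ^ (β - α - 1) e^(-t) dt = Γ(β - α)`, which is finite
since `β - α > 0`. Tonelli applies because the integrability of `β⁻¹ + (2 - β)⁻¹` makes `Γ`
finite on `(0, 2)`, and the spherical integral is measurable in `β` because `lam` is a Markov
kernel on `(0, 2)`.
-/

lemma setLIntegral_Ioi_comp_mul_left {t : ℝ} (ht : 0 < t) (f : ℝ → ℝ≥0∞) :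
    ∫⁻ r in Ioi 0, f (t * r) = ENNReal.ofReal t⁻¹ * ∫⁻ u in Ioi 0, f u := by
  have hemb : MeasurableEmbedding (t * ·) :=
    (Homeomorph.mulLeft₀ t ht.ne').measurableEmbedding
  have hpre : (t * ·) ⁻¹' Ioi 0 = Ioi (0 : ℝ) := by
    ext r
    simp [mul_pos_iff_of_pos_left ht]
  conv_lhs => rw [← hpre, ← hemb.lintegral_map, ← hemb.restrict_map]
  rw [Real.map_volume_mul_left ht.ne',
    Measure.restrict_smul, lintegral_smul_measure, abs_of_pos (inv_pos.mpr ht), smul_eq_mul]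

lemma measure_lt_top_of_le_setLIntegral {α : Type*} [MeasurableSpace α] {μ : Measure α}
    {s : Set α} (hs : MeasurableSet s) {f : α → ℝ≥0∞} {c : ℝ≥0∞} (hc : c ≠ 0)
    (hcf : ∀ x ∈ s, c ≤ f x) (hf : ∫⁻ x in s, f x ∂μ < ⊤) : μ s < ⊤ := by
  have hle : c * μ s ≤ ∫⁻ x in s, f x ∂μ := by
    rw [← setLIntegral_const]
    exact setLIntegral_mono' hs hcf
  exact ENNReal.lt_top_of_mul_ne_top_right (hle.trans_lt hf).ne hc

lemma isFiniteMeasure_restrict_Ioo_of_lintegral_inv_add_inv {Γ : Measure ℝ}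
    (hΓ : ∫⁻ β in Ioo 0 2, ENNReal.ofReal (β⁻¹ + (2 - β)⁻¹) ∂Γ < ⊤) :
    IsFiniteMeasure (Γ.restrict (Ioo 0 2)) := by
  refine ⟨(Measure.restrict_apply_univ _).trans_lt <| measure_lt_top_of_le_setLIntegral
    measurableSet_Ioo (c := ENNReal.ofReal 2⁻¹) (by norm_num) (fun β hβ => ?_) hΓ⟩
  have := inv_anti₀ hβ.1 hβ.2.le
  have := inv_nonneg.mpr (sub_nonneg.mpr hβ.2.le)
  exact ENNReal.ofReal_le_ofReal (by linarith)

lemma Real.ofReal_Gamma_eq_lintegral {s : ℝ} (hs : 0 < s) :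
    ENNReal.ofReal (Real.Gamma s) =
      ∫⁻ x in Ioi 0, ENNReal.ofReal (Real.exp (-x) * x ^ (s - 1)) := by
  rw [Real.Gamma_eq_integral hs, ofReal_integral_eq_lintegral_ofReal
    (Real.GammaIntegral_convergent hs)]
  exact (ae_restrict_iff' measurableSet_Ioi).2 (.of_forall fun x (_ : 0 < x) => by positivity)

lemma measurable_indicator_lintegral {α E : Type*} [MeasurableSpace α] [MeasurableSpace E]
    {s : Set α} (hs : MeasurableSet s) {lam : α → Measure E}
    (hprob : ∀ a ∈ s, IsProbabilityMeasure (lam a))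
    (hlam : ∀ B, MeasurableSet B → Measurable fun a => lam a B)
    {f : α → E → ℝ≥0∞} (hf : Measurable (uncurry f)) :
    Measurable (s.indicator fun a => ∫⁻ x, f a x ∂lam a) := by
  classical
  let κ : Kernel α E := ⟨fun a => if a ∈ s then lam a else 0,
    Measure.measurable_of_measurable_coe _ fun B hB => by
      simp only [apply_ite (fun μ : Measure E => μ B), Measure.coe_zero, Pi.zero_apply]
      exact (hlam B hB).ite hs measurable_const⟩
  have : IsFiniteKernel κ := ⟨⟨1, ENNReal.one_lt_top, fun a => by
    by_cases ha : a ∈ s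
    · have := hprob a ha
      simp [κ, ha]
    · simp [κ, ha]⟩⟩
  convert hf.lintegral_kernel_prod_right (κ := κ) using 1
  ext a
  by_cases ha : a ∈ s <;> simp [κ, ha]

section Radial

variable {E : Type*} [MulAction ℝ E]

noncomputable def radialMass (B : Set E) (β : ℝ) (ξ : E) : ℝ≥0∞ :=
  ∫⁻ r in Ioi 0, B.indicator (fun _ => 1) (r • ξ) * ENNReal.ofReal (r ^ (-β - 1))

lemma radialMass_preimage_smul {t : ℝ} (ht : 0 < t) (B : Set E) (β : ℝ) (ξ : E) :
    radialMass ((t • ·) ⁻¹' B) β ξ = ENNReal.ofReal (t ^ β) * radialMass B β ξ := by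
  have hpow : ∀ r : ℝ, 0 < r → ENNReal.ofReal (r ^ (-β - 1)) =
      ENNReal.ofReal (t ^ (β + 1)) * ENNReal.ofReal ((t * r) ^ (-β - 1)) := fun r hr => by
    rw [← ENNReal.ofReal_mul (by positivity), Real.mul_rpow ht.le hr.le, ← mul_assoc,
      ← Real.rpow_add ht]
    norm_num
  calc radialMass ((t • ·) ⁻¹' B) β ξ
      = ∫⁻ r in Ioi 0, ENNReal.ofReal (t ^ (β + 1)) *
          (B.indicator (fun _ => 1) ((t * r) • ξ) * ENNReal.ofReal ((t * r) ^ (-β - 1))) :=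
        setLIntegral_congr_fun measurableSet_Ioi fun r hr => by
          rw [hpow r hr, ← smul_smul, mul_left_comm]
          rfl
    _ = ENNReal.ofReal (t ^ (β + 1)) * ENNReal.ofReal t⁻¹ * radialMass B β ξ := by
        rw [lintegral_const_mul' _ _ ENNReal.ofReal_ne_top,
          setLIntegral_Ioi_comp_mul_left ht
            (fun u => B.indicator (fun _ => 1) (u • ξ) * ENNReal.ofReal (u ^ (-β - 1))),
          mul_assoc]
        rfl
    _ = ENNReal.ofReal (t ^ β) * radialMass B β ξ := by
        rw [← ENNReal.ofReal_mul (by positivity), ← Real.rpow_neg_one, ← Real.rpow_add ht,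
          add_neg_cancel_right]

lemma measurable_uncurry_radialMass [MeasurableSpace E] [MeasurableSMul₂ ℝ E] {B : Set E}
    (hB : MeasurableSet B) :
    Measurable (uncurry (radialMass B)) :=
  Measurable.lintegral_prod_right' (f := fun p : (ℝ × E) × ℝ =>
    B.indicator (fun _ => 1) (p.2 • p.1.2) * ENNReal.ofReal (p.2 ^ (-p.1.1 - 1)))
    (((measurable_const.indicator hB).comp (measurable_snd.smul measurable_fst.snd)).mul
      (by fun_prop))

end Radial

lemma lintegral_rpow_exp_mul_lintegral_rpow {α : ℝ} {Γ : Measure ℝ} [SFinite Γ]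
    (hΓα : ∀ᵐ β ∂Γ, α < β) {I : ℝ → ℝ≥0∞} (hI : Measurable I) :
    ∫⁻ t in Ioi 0, ENNReal.ofReal (t ^ (-α - 1) * Real.exp (-t)) *
        ∫⁻ β, ENNReal.ofReal (t ^ β) * I β ∂Γ
      = ∫⁻ β, ENNReal.ofReal (Real.Gamma (β - α)) * I β ∂Γ := by
  set g : ℝ → ℝ≥0∞ := fun t => ENNReal.ofReal (t ^ (-α - 1) * Real.exp (-t))
  have hg : Measurable g := by fun_prop
  calc ∫⁻ t in Ioi 0, g t * ∫⁻ β, ENNReal.ofReal (t ^ β) * I β ∂Γ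
      = ∫⁻ t in Ioi 0, ∫⁻ β, g t * (ENNReal.ofReal (t ^ β) * I β) ∂Γ := by
        refine setLIntegral_congr_fun measurableSet_Ioi fun t _ => ?_
        exact (lintegral_const_mul' _ _ ENNReal.ofReal_ne_top).symm
    _ = ∫⁻ β, (∫⁻ t in Ioi 0, g t * ENNReal.ofReal (t ^ β) * I β) ∂Γ := by
        simp_rw [mul_assoc]
        refine lintegral_lintegral_swap (μ := volume.restrict (Ioi (0:ℝ))) (ν := Γ)
          (Measurable.aemeasurable ?_)
        exact (hg.comp measurable_fst).mul
          ((by fun_prop : Measurable fun p : ℝ × ℝ => ENNReal.ofReal (p.1 ^ p.2)).mul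
            (hI.comp measurable_snd))
    _ = ∫⁻ β, ENNReal.ofReal (Real.Gamma (β - α)) * I β ∂Γ := by
        apply lintegral_congr_ae
        filter_upwards [hΓα] with β hβ
        rw [lintegral_mul_const _ (by fun_prop), Real.ofReal_Gamma_eq_lintegral (by linarith)]
        congr 1
        refine setLIntegral_congr_fun measurableSet_Ioi fun t (ht : 0 < t) => ?_
        rw [← ENNReal.ofReal_mul (by positivity), mul_right_comm, mul_comm, ← Real.rpow_add ht]
        ring_nf

theorem stmt5_general (d : ℕ) (α : ℝ) (hα : α < 0)
    (Γ : Measure ℝ) (lam : ℝ → Measure (EuclideanSpace ℝ (Fin d)))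
    (hprob : ∀ β ∈ Set.Ioo (0:ℝ) 2, IsProbabilityMeasure (lam β))
    (hmeas : ∀ B : Set (EuclideanSpace ℝ (Fin d)), MeasurableSet B →
      Measurable (fun β => lam β B))
    (hΓ : ∫⁻ β in Set.Ioo (0:ℝ) 2, ENNReal.ofReal (β⁻¹ + (2 - β)⁻¹) ∂Γ < ⊤)
    (ν : Measure (EuclideanSpace ℝ (Fin d)))
    (hν : ∀ B : Set (EuclideanSpace ℝ (Fin d)), MeasurableSet B →
      ν B = ∫⁻ β in Set.Ioo (0:ℝ) 2,
        (∫⁻ ξ, (∫⁻ r in Set.Ioi (0:ℝ),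
          Set.indicator B (fun _ => (1:ℝ≥0∞)) (r • ξ) * ENNReal.ofReal (r ^ (-β - 1)))
            ∂(lam β)) ∂Γ) :
    ∀ B : Set (EuclideanSpace ℝ (Fin d)), MeasurableSet B →
      (∫⁻ t in Set.Ioi (0:ℝ), ENNReal.ofReal (t ^ (-α - 1) * Real.exp (-t)) *
          ν ((fun x => t • x) ⁻¹' B))
        = ∫⁻ β in Set.Ioo (0:ℝ) 2, ENNReal.ofReal (Real.Gamma (β - α)) *
            (∫⁻ ξ, (∫⁻ u in Set.Ioi (0:ℝ),
              Set.indicator B (fun _ => (1:ℝ≥0∞)) (u • ξ) * ENNReal.ofReal (u ^ (-β - 1)))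
                ∂(lam β)) ∂Γ := by
  intro B hB
  set I := (Ioo (0:ℝ) 2).indicator fun β => ∫⁻ ξ, radialMass B β ξ ∂lam β
  have hI : Measurable I :=
    measurable_indicator_lintegral measurableSet_Ioo hprob hmeas (measurable_uncurry_radialMass hB)
  have hIβ : ∀ β ∈ Ioo (0:ℝ) 2, I β = ∫⁻ ξ, radialMass B β ξ ∂lam β := fun β hβ =>
    indicator_of_mem hβ _
  have hνI : ∀ t : ℝ, 0 < t →
      ν ((t • ·) ⁻¹' B) = ∫⁻ β in Ioo 0 2, ENNReal.ofReal (t ^ β) * I β ∂Γ := fun t ht => by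
    rw [hν _ (measurable_const_smul t hB)]
    refine setLIntegral_congr_fun measurableSet_Ioo fun β hβ => ?_
    rw [hIβ β hβ, ← lintegral_const_mul' _ _ ENNReal.ofReal_ne_top]
    exact lintegral_congr fun ξ => radialMass_preimage_smul ht B β ξ
  have := isFiniteMeasure_restrict_Ioo_of_lintegral_inv_add_inv hΓ
  calc _ = ∫⁻ t in Ioi 0, ENNReal.ofReal (t ^ (-α - 1) * Real.exp (-t)) *
          ∫⁻ β in Ioo 0 2, ENNReal.ofReal (t ^ β) * I β ∂Γ :=
        setLIntegral_congr_fun measurableSet_Ioi fun t ht => by rw [hνI t ht]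
    _ = ∫⁻ β in Ioo 0 2, ENNReal.ofReal (Real.Gamma (β - α)) * I β ∂Γ :=
        lintegral_rpow_exp_mul_lintegral_rpow
          ((ae_restrict_iff' measurableSet_Ioo).2 (.of_forall fun β hβ => hα.trans hβ.1)) hI
    _ = _ := setLIntegral_congr_fun measurableSet_Ioo fun β hβ => by rw [hIβ β hβ]; rfl

/-- Let `α < 0` and let `ν` be a Lévy measure in polar form with spectral measure `Γ` on
`(0,2)` and measurable family `lam` of probability measures on the unit sphere.  Then for every
Borel set `B`,
`∫_0^∞ t^{-α-1} e^{-t} ν(t⁻¹B) dt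
   = ∫_{(0,2)} Γ(β-α) Γ(dβ) ∫_S lam_β(dξ) ∫_0^∞ 1_B(uξ) u^{-β-1} du`. -/
theorem stmt5 (d : ℕ) (α : ℝ) (hα : α < 0)
    (Γ : Measure ℝ) (lam : ℝ → Measure (EuclideanSpace ℝ (Fin d)))
    (hprob : ∀ β ∈ Set.Ioo (0:ℝ) 2, IsProbabilityMeasure (lam β))
    (hsph : ∀ β ∈ Set.Ioo (0:ℝ) 2, lam β {ξ : EuclideanSpace ℝ (Fin d) | ‖ξ‖ = 1} = 1)
    (hmeas : ∀ B : Set (EuclideanSpace ℝ (Fin d)), MeasurableSet B →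
      Measurable (fun β => lam β B))
    (hΓ : ∫⁻ β in Set.Ioo (0:ℝ) 2, ENNReal.ofReal (β⁻¹ + (2 - β)⁻¹) ∂Γ < ⊤)
    (ν : Measure (EuclideanSpace ℝ (Fin d)))
    (hν : ∀ B : Set (EuclideanSpace ℝ (Fin d)), MeasurableSet B →
      ν B = ∫⁻ β in Set.Ioo (0:ℝ) 2,
        (∫⁻ ξ, (∫⁻ r in Set.Ioi (0:ℝ),
          Set.indicator B (fun _ => (1:ℝ≥0∞)) (r • ξ) * ENNReal.ofReal (r ^ (-β - 1)))
            ∂(lam β)) ∂Γ) :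
    ∀ B : Set (EuclideanSpace ℝ (Fin d)), MeasurableSet B →
      (∫⁻ t in Set.Ioi (0:ℝ), ENNReal.ofReal (t ^ (-α - 1) * Real.exp (-t)) *
          ν ((fun x => t • x) ⁻¹' B))
        = ∫⁻ β in Set.Ioo (0:ℝ) 2, ENNReal.ofReal (Real.Gamma (β - α)) *
            (∫⁻ ξ, (∫⁻ u in Set.Ioi (0:ℝ),
              Set.indicator B (fun _ => (1:ℝ≥0∞)) (u • ξ) * ENNReal.ofReal (u ^ (-β - 1)))
                ∂(lam β)) ∂Γ :=
  stmt5_general d α hα Γ lam hprob hmeas hΓ ν hν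
end

section
/- Let α < 0 and ν_ρ as above with Γ_ρ concentrated on (0,2). Then ∫_0^∞ t^{-α} e^{-t} dt ∫_{ℝ^d} |x| · |1_{{|tx|≤1}}(x) - 1_{{|x|≤1}}(x)| ν_ρ(dx) = ∫_{|x|>1} |x| ν_ρ(dx) ∫_0^{1/|x|} t^{-α} e^{-t} dt + ∫_{|x|≤1} |x| ν_ρ(dx) ∫_{1/|x|}^∞ t^{-α} e^{-t} dt, and this quantity is finite for every Lévy measure ν_ρ. -/
/-
Swap the order of integration by Tonelli: a Lévy measure is σ-finite, since `min (‖x‖², 1)` is a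
finite-integral density that is positive off the null set `{0}`. For fixed `x` with `t > 0`,
`‖t • x‖ ≤ 1 ↔ t ≤ ‖x‖⁻¹`, so the jump `|1_{‖t • x‖ ≤ 1} - 1_{‖x‖ ≤ 1}|` is the indicator of
`(0, ‖x‖⁻¹]` when `‖x‖ > 1` and of `(‖x‖⁻¹, ∞)` when `‖x‖ ≤ 1`, which gives the two terms.

For finiteness, `t ^ (-α) e^{-t} ≤ 1` on `(0, 1)` bounds the first inner term by
`‖x‖ · ‖x‖⁻¹ = 1`, and `1 ≤ t ‖x‖` on `(‖x‖⁻¹, ∞)` bounds the second by `Γ(2 - α) ‖x‖²`;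
so both are dominated by a multiple of `min (‖x‖², 1)`.
-/

open MeasureTheory Set Real
open scoped ENNReal

lemma sigmaFinite_of_lintegral_ne_top {X : Type*} [MeasurableSpace X] {μ : Measure X}
    {f : X → ℝ≥0∞} (hf : Measurable f) (hf_ne_zero : ∀ᵐ x ∂μ, f x ≠ 0)
    (hf_ne_top : ∀ᵐ x ∂μ, f x ≠ ∞) (hfin : ∫⁻ x, f x ∂μ ≠ ∞) : SigmaFinite μ := by
  have : IsFiniteMeasure (μ.withDensity f) := isFiniteMeasure_withDensity hfin
  have : SigmaFinite ((μ.withDensity f).withDensity fun x ↦ (f x)⁻¹) :=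
    SigmaFinite.withDensity_of_ne_top <| (withDensity_absolutelyContinuous μ f).ae_le <|
      hf_ne_zero.mono fun x hx ↦ ENNReal.inv_ne_top.2 hx
  rwa [withDensity_inv_same hf hf_ne_zero hf_ne_top] at this

lemma ofReal_mul_lintegral_Ioo_inv_le_one {α : ℝ} (hα : α ≤ 0) {r : ℝ} (hr : 1 ≤ r) :
    ENNReal.ofReal r * ∫⁻ t in Ioo 0 r⁻¹, ENNReal.ofReal (t ^ (-α) * exp (-t)) ≤ 1 := by
  have hr0 : 0 < r := one_pos.trans_le hr
  have hle_one : ∀ t ∈ Ioo 0 r⁻¹, ENNReal.ofReal (t ^ (-α) * exp (-t)) ≤ 1 := fun t ht ↦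
    ENNReal.ofReal_le_one.2 <| mul_le_one₀
      (rpow_le_one ht.1.le (ht.2.le.trans (inv_le_one_of_one_le₀ hr)) (neg_nonneg.2 hα))
      (exp_nonneg _) (exp_le_one_iff.2 (neg_nonpos.2 ht.1.le))
  calc ENNReal.ofReal r * ∫⁻ t in Ioo 0 r⁻¹, ENNReal.ofReal (t ^ (-α) * exp (-t))
      ≤ ENNReal.ofReal r * ∫⁻ _ in Ioo 0 r⁻¹, 1 :=
        mul_le_mul_right (setLIntegral_mono' measurableSet_Ioo hle_one) _
    _ = 1 := by
        rw [setLIntegral_one, volume_Ioo, sub_zero, ← ENNReal.ofReal_mul hr0.le,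
          mul_inv_cancel₀ hr0.ne', ENNReal.ofReal_one]

lemma ofReal_mul_lintegral_Ioi_inv_le {α r : ℝ} (hr : 0 ≤ r) :
    ENNReal.ofReal r * ∫⁻ t in Ioi r⁻¹, ENNReal.ofReal (t ^ (-α) * exp (-t))
      ≤ ENNReal.ofReal (r ^ 2) * ∫⁻ t in Ioi 0, ENNReal.ofReal (t ^ (1 - α) * exp (-t)) := by
  rcases hr.eq_or_lt with rfl | hr0
  · simp
  have hle : ∀ t ∈ Ioi r⁻¹, ENNReal.ofReal (t ^ (-α) * exp (-t))
      ≤ ENNReal.ofReal r * ENNReal.ofReal (t ^ (1 - α) * exp (-t)) := by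
    intro t ht
    have ht0 : 0 < t := (inv_pos.2 hr0).trans ht
    have hrt : 1 ≤ r * t := by
      rw [mem_Ioi, inv_lt_iff_one_lt_mul₀' hr0] at ht
      exact ht.le
    rw [← ENNReal.ofReal_mul hr0.le]
    refine ENNReal.ofReal_le_ofReal ?_
    calc t ^ (-α) * exp (-t) ≤ r * t * (t ^ (-α) * exp (-t)) :=
          le_mul_of_one_le_left (by positivity) hrt
      _ = r * (t ^ (1 - α) * exp (-t)) := by
          rw [sub_eq_add_neg, rpow_add ht0, rpow_one]; ring
  calc ENNReal.ofReal r * ∫⁻ t in Ioi r⁻¹, ENNReal.ofReal (t ^ (-α) * exp (-t))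
      ≤ ENNReal.ofReal r *
          ∫⁻ t in Ioi r⁻¹, ENNReal.ofReal r * ENNReal.ofReal (t ^ (1 - α) * exp (-t)) :=
        mul_le_mul_right (setLIntegral_mono' measurableSet_Ioi hle) _
    _ ≤ ENNReal.ofReal r *
          (ENNReal.ofReal r * ∫⁻ t in Ioi 0, ENNReal.ofReal (t ^ (1 - α) * exp (-t))) := by
        rw [lintegral_const_mul _ (by fun_prop)]
        gcongr
        exact inv_nonneg.2 hr
    _ = ENNReal.ofReal (r ^ 2) * ∫⁻ t in Ioi 0, ENNReal.ofReal (t ^ (1 - α) * exp (-t)) := by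
        rw [← mul_assoc, ← ENNReal.ofReal_mul hr, sq]

lemma lintegral_Ioi_rpow_mul_exp_neg {α : ℝ} (hα : α < 2) :
    ∫⁻ t in Ioi 0, ENNReal.ofReal (t ^ (1 - α) * exp (-t)) = ENNReal.ofReal (Gamma (2 - α)) := by
  have hs : 0 < 2 - α := by linarith
  have hα' : 1 - α = 2 - α - 1 := by ring
  simp_rw [hα', mul_comm _ (exp _)]
  rw [Gamma_eq_integral hs, ofReal_integral_eq_lintegral_ofReal (GammaIntegral_convergent hs)]
  filter_upwards [ae_restrict_mem measurableSet_Ioi] with t ht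
  exact mul_nonneg (exp_nonneg _) (rpow_nonneg (mem_Ioi.1 ht).le _)

section Norm

variable {F : Type*} [NormedAddCommGroup F] [MeasurableSpace F] [OpensMeasurableSpace F]

lemma sigmaFinite_of_lintegral_min_sq_one_lt_top {μ : Measure F} (h0 : μ {0} = 0)
    (hfin : ∫⁻ x, ENNReal.ofReal (min (‖x‖ ^ 2) 1) ∂μ < ⊤) : SigmaFinite μ := by
  refine sigmaFinite_of_lintegral_ne_top (by fun_prop) ?_
    (ae_of_all _ fun _ ↦ ENNReal.ofReal_ne_top) hfin.ne
  filter_upwards [measure_eq_zero_iff_ae_notMem.1 h0] with x hx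
  exact (ENNReal.ofReal_pos.2 <| lt_min (pow_pos (norm_pos_iff.2 hx) 2) one_pos).ne'

lemma setLIntegral_one_lt_norm_le_lintegral_min {α : ℝ} (hα : α ≤ 0) (μ : Measure F) :
    ∫⁻ x in {x | 1 < ‖x‖},
        ENNReal.ofReal ‖x‖ * (∫⁻ t in Ioo 0 ‖x‖⁻¹, ENNReal.ofReal (t ^ (-α) * exp (-t))) ∂μ
      ≤ ∫⁻ x, ENNReal.ofReal (min (‖x‖ ^ 2) 1) ∂μ := by
  refine (setLIntegral_mono' (measurableSet_lt measurable_const measurable_norm)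
    fun x (hx : 1 < ‖x‖) ↦ ?_).trans (setLIntegral_le_lintegral _ _)
  rw [min_eq_right (one_le_pow₀ hx.le), ENNReal.ofReal_one]
  exact ofReal_mul_lintegral_Ioo_inv_le_one hα hx.le

lemma setLIntegral_norm_le_one_le_Gamma_mul_lintegral_min {α : ℝ} (hα : α < 2) (μ : Measure F) :
    ∫⁻ x in {x | ‖x‖ ≤ 1},
        ENNReal.ofReal ‖x‖ * (∫⁻ t in Ioi ‖x‖⁻¹, ENNReal.ofReal (t ^ (-α) * exp (-t))) ∂μ
      ≤ ENNReal.ofReal (Gamma (2 - α)) * ∫⁻ x, ENNReal.ofReal (min (‖x‖ ^ 2) 1) ∂μ := by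
  have hB : MeasurableSet {x : F | ‖x‖ ≤ 1} := measurableSet_le measurable_norm measurable_const
  calc _ ≤ ∫⁻ x in {x | ‖x‖ ≤ 1},
          ENNReal.ofReal (Gamma (2 - α)) * ENNReal.ofReal (min (‖x‖ ^ 2) 1) ∂μ := by
        refine setLIntegral_mono' hB fun x (hx : ‖x‖ ≤ 1) ↦ ?_
        rw [min_eq_left (pow_le_one₀ (norm_nonneg x) hx), ← lintegral_Ioi_rpow_mul_exp_neg hα]
        exact (ofReal_mul_lintegral_Ioi_inv_le (norm_nonneg x)).trans_eq (mul_comm _ _)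
    _ ≤ ENNReal.ofReal (Gamma (2 - α)) * ∫⁻ x, ENNReal.ofReal (min (‖x‖ ^ 2) 1) ∂μ := by
        rw [lintegral_const_mul _ (by fun_prop)]
        exact mul_le_mul_right (setLIntegral_le_lintegral _ _) _

end Norm

section NormedSpace

variable {F : Type*} [NormedAddCommGroup F] [NormedSpace ℝ F]

lemma norm_smul_le_one_iff_le_inv {t : ℝ} (ht : 0 < t) {x : F} (hx : 0 < ‖x‖) :
    ‖t • x‖ ≤ 1 ↔ t ≤ ‖x‖⁻¹ := by
  rw [norm_smul, norm_of_nonneg ht.le, ← one_div, le_div_iff₀ hx]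

lemma ofReal_mul_abs_indicator_sub_of_one_lt (α : ℝ) {x : F} (hx : 1 < ‖x‖) {t : ℝ} (ht : 0 < t) :
    ENNReal.ofReal (t ^ (-α) * exp (-t) *
        (‖x‖ * |(if ‖t • x‖ ≤ 1 then (1:ℝ) else 0) - (if ‖x‖ ≤ 1 then (1:ℝ) else 0)|))
      = (Ioc 0 ‖x‖⁻¹).indicator
          (fun t ↦ ENNReal.ofReal ‖x‖ * ENNReal.ofReal (t ^ (-α) * exp (-t))) t := by
  have hiff := norm_smul_le_one_iff_le_inv ht (one_pos.trans hx)
  by_cases h : t ≤ ‖x‖⁻¹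
  · simp [h, hiff, ht, hx.not_ge, mul_comm]
  · simp [h, hiff, hx.not_ge]

lemma ofReal_mul_abs_indicator_sub_of_le_one (α : ℝ) {x : F} (hx : ‖x‖ ≤ 1) {t : ℝ} (ht : 0 < t) :
    ENNReal.ofReal (t ^ (-α) * exp (-t) *
        (‖x‖ * |(if ‖t • x‖ ≤ 1 then (1:ℝ) else 0) - (if ‖x‖ ≤ 1 then (1:ℝ) else 0)|))
      = (Ioi ‖x‖⁻¹).indicator
          (fun t ↦ ENNReal.ofReal ‖x‖ * ENNReal.ofReal (t ^ (-α) * exp (-t))) t := by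
  rcases (norm_nonneg x).eq_or_lt with hx0 | hx0
  · simp [← hx0]
  have hiff := norm_smul_le_one_iff_le_inv ht hx0
  by_cases h : t ≤ ‖x‖⁻¹
  · simp [h, hiff, hx]
  · rw [indicator_of_mem (mem_Ioi.2 (not_le.mp h))]
    simp [h, hiff, hx, mul_comm]

lemma setLIntegral_Ioi_zero_eq_of_eq_indicator {f g : ℝ → ℝ≥0∞} {s : Set ℝ} (hs : MeasurableSet s)
    (hs0 : s ⊆ Ioi 0) (hfg : ∀ t, 0 < t → f t = s.indicator g t) :
    ∫⁻ t in Ioi 0, f t = ∫⁻ t in s, g t := by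
  rw [setLIntegral_congr_fun measurableSet_Ioi hfg, setLIntegral_indicator hs,
    inter_eq_self_of_subset_left hs0]

lemma measurable_ofReal_rpow_mul_exp_neg (α : ℝ) :
    Measurable fun t : ℝ ↦ ENNReal.ofReal (t ^ (-α) * exp (-t)) := by
  fun_prop

lemma lintegral_Ioi_mul_abs_indicator_sub_of_one_lt (α : ℝ) {x : F} (hx : 1 < ‖x‖) :
    ∫⁻ t in Ioi 0, ENNReal.ofReal (t ^ (-α) * exp (-t) *
        (‖x‖ * |(if ‖t • x‖ ≤ 1 then (1:ℝ) else 0) - (if ‖x‖ ≤ 1 then (1:ℝ) else 0)|))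
      = ENNReal.ofReal ‖x‖ * ∫⁻ t in Ioo 0 ‖x‖⁻¹, ENNReal.ofReal (t ^ (-α) * exp (-t)) := by
  rw [setLIntegral_Ioi_zero_eq_of_eq_indicator measurableSet_Ioc Ioc_subset_Ioi_self
      fun t ht ↦ ofReal_mul_abs_indicator_sub_of_one_lt α hx ht,
    lintegral_const_mul _ (measurable_ofReal_rpow_mul_exp_neg α), setLIntegral_congr Ioo_ae_eq_Ioc]

lemma lintegral_Ioi_mul_abs_indicator_sub_of_le_one (α : ℝ) {x : F} (hx : ‖x‖ ≤ 1) :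
    ∫⁻ t in Ioi 0, ENNReal.ofReal (t ^ (-α) * exp (-t) *
        (‖x‖ * |(if ‖t • x‖ ≤ 1 then (1:ℝ) else 0) - (if ‖x‖ ≤ 1 then (1:ℝ) else 0)|))
      = ENNReal.ofReal ‖x‖ * ∫⁻ t in Ioi ‖x‖⁻¹, ENNReal.ofReal (t ^ (-α) * exp (-t)) := by
  rw [setLIntegral_Ioi_zero_eq_of_eq_indicator measurableSet_Ioi
      (Ioi_subset_Ioi (inv_nonneg.2 (norm_nonneg x)))
      fun t ht ↦ ofReal_mul_abs_indicator_sub_of_le_one α hx ht,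
    lintegral_const_mul _ (measurable_ofReal_rpow_mul_exp_neg α)]

variable [MeasurableSpace F] [OpensMeasurableSpace F]

lemma measurable_ofReal_mul_abs_indicator_sub (α : ℝ) :
    Measurable fun p : ℝ × F ↦ ENNReal.ofReal (p.1 ^ (-α) * exp (-p.1) *
      (‖p.2‖ * |(if ‖p.1 • p.2‖ ≤ 1 then (1:ℝ) else 0) - (if ‖p.2‖ ≤ 1 then (1:ℝ) else 0)|)) := by
  have h₁ : MeasurableSet {p : ℝ × F | ‖p.1 • p.2‖ ≤ 1} :=
    measurableSet_le (continuous_fst.smul continuous_snd).norm.measurable measurable_const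
  have h₂ : MeasurableSet {p : ℝ × F | ‖p.2‖ ≤ 1} :=
    measurableSet_le (by fun_prop) measurable_const
  have : Measurable fun p : ℝ × F ↦
      (if ‖p.1 • p.2‖ ≤ 1 then (1:ℝ) else 0) - (if ‖p.2‖ ≤ 1 then (1:ℝ) else 0) :=
    (measurable_const.ite h₁ measurable_const).sub (measurable_const.ite h₂ measurable_const)
  fun_prop

lemma lintegral_Ioi_lintegral_mul_abs_indicator_sub (α : ℝ) (μ : Measure F) [SFinite μ] :
    ∫⁻ t in Ioi 0, ∫⁻ x, ENNReal.ofReal (t ^ (-α) * exp (-t) *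
        (‖x‖ * |(if ‖t • x‖ ≤ 1 then (1:ℝ) else 0) - (if ‖x‖ ≤ 1 then (1:ℝ) else 0)|)) ∂μ
      = (∫⁻ x in {x | 1 < ‖x‖},
          ENNReal.ofReal ‖x‖ * (∫⁻ t in Ioo 0 ‖x‖⁻¹, ENNReal.ofReal (t ^ (-α) * exp (-t))) ∂μ)
        + ∫⁻ x in {x | ‖x‖ ≤ 1},
          ENNReal.ofReal ‖x‖ * (∫⁻ t in Ioi ‖x‖⁻¹, ENNReal.ofReal (t ^ (-α) * exp (-t))) ∂μ := by
  have hS : MeasurableSet {x : F | 1 < ‖x‖} := measurableSet_lt measurable_const measurable_norm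
  rw [lintegral_lintegral_swap (measurable_ofReal_mul_abs_indicator_sub α).aemeasurable,
    ← lintegral_add_compl _ hS, compl_ofPred]
  simp only [not_lt]
  congr 1
  · exact setLIntegral_congr_fun hS fun x hx ↦ lintegral_Ioi_mul_abs_indicator_sub_of_one_lt α hx
  · exact setLIntegral_congr_fun (measurableSet_le measurable_norm measurable_const)
      fun x hx ↦ lintegral_Ioi_mul_abs_indicator_sub_of_le_one α hx

end NormedSpace

/-- Let `α < 0` and let `ν` be a Lévy measure on `ℝ^d`.  Then
`∫_0^∞ t^{-α} e^{-t} dt ∫ |x| |1_{|tx|≤1} - 1_{|x|≤1}| ν(dx)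
  = ∫_{|x|>1} |x| ν(dx) ∫_0^{1/|x|} t^{-α}e^{-t} dt
    + ∫_{|x|≤1} |x| ν(dx) ∫_{1/|x|}^∞ t^{-α}e^{-t} dt`,
and this quantity is finite. -/
theorem stmt6 (d : ℕ) (α : ℝ) (hα : α < 0)
    (ν : Measure (EuclideanSpace ℝ (Fin d)))
    (hν0 : ν {0} = 0)
    (hνfin : ∫⁻ x, ENNReal.ofReal (min (‖x‖ ^ 2) 1) ∂ν < ⊤) :
    (∫⁻ t in Set.Ioi (0:ℝ), ∫⁻ x, ENNReal.ofReal (t ^ (-α) * Real.exp (-t) *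
        (‖x‖ * |(if ‖t • x‖ ≤ 1 then (1:ℝ) else 0) - (if ‖x‖ ≤ 1 then (1:ℝ) else 0)|)) ∂ν)
      = (∫⁻ x in {x : EuclideanSpace ℝ (Fin d) | 1 < ‖x‖},
            ENNReal.ofReal ‖x‖ *
              (∫⁻ t in Set.Ioo (0:ℝ) ‖x‖⁻¹, ENNReal.ofReal (t ^ (-α) * Real.exp (-t))) ∂ν)
        + (∫⁻ x in {x : EuclideanSpace ℝ (Fin d) | ‖x‖ ≤ 1},
            ENNReal.ofReal ‖x‖ *
              (∫⁻ t in Set.Ioi ‖x‖⁻¹, ENNReal.ofReal (t ^ (-α) * Real.exp (-t))) ∂ν) ∧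
    (∫⁻ t in Set.Ioi (0:ℝ), ∫⁻ x, ENNReal.ofReal (t ^ (-α) * Real.exp (-t) *
        (‖x‖ * |(if ‖t • x‖ ≤ 1 then (1:ℝ) else 0) - (if ‖x‖ ≤ 1 then (1:ℝ) else 0)|)) ∂ν) < ⊤ := by
  have : SigmaFinite ν := sigmaFinite_of_lintegral_min_sq_one_lt_top hν0 hνfin
  rw [lintegral_Ioi_lintegral_mul_abs_indicator_sub α ν]
  refine ⟨rfl, ENNReal.add_lt_top.2 ⟨?_, ?_⟩⟩
  · exact (setLIntegral_one_lt_norm_le_lintegral_min hα.le ν).trans_lt hνfin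
  · exact (setLIntegral_norm_le_one_le_Gamma_mul_lintegral_min (by linarith) ν).trans_lt
      (ENNReal.mul_lt_top ENNReal.ofReal_lt_top hνfin)
end

section
/- Let b > 1, 0 < α ≤ 2, and let 𝔖_α(b) = {ρ ∈ ID(ℝ^d) : P_{b^α}ρ = T_bρ * δ_γ for some γ ∈ ℝ^d} (semi-stable distributions with span b, including point masses). Define Φρ = T_bρ * ρ. Then Φ maps 𝔖_α(b) onto 𝔖_α(b): if ρ ∈ 𝔖_α(b) then Φρ ∈ 𝔖_α(b), and every μ ∈ 𝔖_α(b) equals Φρ for ρ = P_{1/(b^α+1)}(μ * δ_{(1/(b+1))γ'}), where P_{b^α}μ = T_bμ * δ_{γ'}. -/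
/-!
Write `Φρ = T_bρ * ρ`. Since `T_b` and `P_t` commute and distribute over `*`, the semi-stability
relation `P_{b^α}ρ = T_bρ * δ_γ` is transported by `Φ` with the shift `bγ + γ`. Conversely, if
`P_{b^α}μ = T_bμ * δ_{γ'}`, then shifting `μ` by `γ'/(b+1)` gives `ν` with
`Φν = T_bμ * μ * δ_{γ'} = P_{b^α+1}μ`, and `Φ` commutes with `P_{1/(b^α+1)}`.
-/

/-- An abstract calculus of infinitely divisible distributions on a real vector space `E`:
`conv` is convolution, `P t` is raising to the `t`-th convolution power (`t > 0`),
`T a` is dilation by `a ≠ 0`, and `delta γ` is the point mass at `γ`, together with the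
standard algebraic identities these operations satisfy on `ID(ℝ^d)`. -/
structure IDAlg (E : Type*) [AddCommGroup E] [Module ℝ E] where
  X : Type*
  conv : X → X → X
  P : ℝ → X → X
  T : ℝ → X → X
  delta : E → X
  conv_comm : ∀ μ ν, conv μ ν = conv ν μ
  conv_assoc : ∀ μ ν κ, conv (conv μ ν) κ = conv μ (conv ν κ)
  conv_delta_zero : ∀ μ, conv μ (delta 0) = μ
  P_one : ∀ μ, P 1 μ = μ
  P_mul : ∀ s t : ℝ, 0 < s → 0 < t → ∀ μ, P s (P t μ) = P (s * t) μ
  P_conv : ∀ t : ℝ, 0 < t → ∀ μ ν, P t (conv μ ν) = conv (P t μ) (P t ν)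
  P_add : ∀ s t : ℝ, 0 < s → 0 < t → ∀ μ, conv (P s μ) (P t μ) = P (s + t) μ
  P_delta : ∀ t : ℝ, 0 < t → ∀ γ, P t (delta γ) = delta (t • γ)
  T_one : ∀ μ, T 1 μ = μ
  T_mul : ∀ a b : ℝ, a ≠ 0 → b ≠ 0 → ∀ μ, T a (T b μ) = T (a * b) μ
  T_conv : ∀ a : ℝ, a ≠ 0 → ∀ μ ν, T a (conv μ ν) = conv (T a μ) (T a ν)
  T_P : ∀ a t : ℝ, a ≠ 0 → 0 < t → ∀ μ, T a (P t μ) = P t (T a μ)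
  T_delta : ∀ a : ℝ, a ≠ 0 → ∀ γ, T a (delta γ) = delta (a • γ)
  delta_conv : ∀ γ γ', conv (delta γ) (delta γ') = delta (γ + γ')

namespace IDAlg

variable {E : Type*} [AddCommGroup E] [Module ℝ E] (A : IDAlg E)

theorem conv_conv_conv_comm (μ ν κ η : A.X) :
    A.conv (A.conv μ ν) (A.conv κ η) = A.conv (A.conv μ κ) (A.conv ν η) := by
  rw [A.conv_assoc, ← A.conv_assoc ν κ η, A.conv_comm ν κ, A.conv_assoc κ ν η, ← A.conv_assoc]

theorem T_conv_delta {a : ℝ} (ha : a ≠ 0) (μ : A.X) (γ : E) :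
    A.T a (A.conv μ (A.delta γ)) = A.conv (A.T a μ) (A.delta (a • γ)) := by
  rw [A.T_conv a ha, A.T_delta a ha]

theorem P_conv_T_self {a t : ℝ} (ha : a ≠ 0) (ht : 0 < t) {ρ : A.X} {γ : E}
    (hρ : A.P t ρ = A.conv (A.T a ρ) (A.delta γ)) :
    A.P t (A.conv (A.T a ρ) ρ)
      = A.conv (A.T a (A.conv (A.T a ρ) ρ)) (A.delta (a • γ + γ)) := by
  rw [A.P_conv t ht, ← A.T_P a t ha ht, hρ, A.T_conv_delta ha, A.T_conv a ha,
    A.conv_conv_conv_comm, A.delta_conv]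

theorem T_P_conv_P {a s : ℝ} (ha : a ≠ 0) (hs : 0 < s) (ν : A.X) :
    A.conv (A.T a (A.P s ν)) (A.P s ν) = A.P s (A.conv (A.T a ν) ν) := by
  rw [A.T_P a s ha hs, A.P_conv s hs]

theorem T_conv_self_of_shift {a t : ℝ} (ha : a ≠ 0) (ha1 : a + 1 ≠ 0) (ht : 0 < t)
    {μ : A.X} {γ : E} (hμ : A.P t μ = A.conv (A.T a μ) (A.delta γ)) :
    A.conv (A.T a (A.conv μ (A.delta ((1 / (a + 1)) • γ))))
        (A.conv μ (A.delta ((1 / (a + 1)) • γ)))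
      = A.P (t + 1) μ := by
  have hshift : a • (1 / (a + 1)) • γ + (1 / (a + 1)) • γ = γ := by
    rw [smul_smul, ← add_smul, ← add_one_mul, mul_one_div_cancel ha1, one_smul]
  rw [A.T_conv_delta ha, A.conv_conv_conv_comm, A.delta_conv, hshift, A.conv_assoc,
    A.conv_comm μ, ← A.conv_assoc, ← hμ, ← A.P_add t 1 ht one_pos, A.P_one]

end IDAlg

theorem stmt14_general (E : Type*) [AddCommGroup E] [Module ℝ E] (Alg : IDAlg E)
    (b α : ℝ) (hb : 1 < b) :
    (∀ ρ, (∃ γ, Alg.P (b ^ α) ρ = Alg.conv (Alg.T b ρ) (Alg.delta γ)) →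
      ∃ γ, Alg.P (b ^ α) (Alg.conv (Alg.T b ρ) ρ)
        = Alg.conv (Alg.T b (Alg.conv (Alg.T b ρ) ρ)) (Alg.delta γ)) ∧
    (∀ μ γ', Alg.P (b ^ α) μ = Alg.conv (Alg.T b μ) (Alg.delta γ') →
      Alg.conv
          (Alg.T b (Alg.P (1 / (b ^ α + 1)) (Alg.conv μ (Alg.delta ((1 / (b + 1)) • γ')))))
          (Alg.P (1 / (b ^ α + 1)) (Alg.conv μ (Alg.delta ((1 / (b + 1)) • γ')))) = μ) := by
  have hb0 : 0 < b := one_pos.trans hb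
  have hpow : 0 < b ^ α := Real.rpow_pos_of_pos hb0 α
  have hpow1 : 0 < b ^ α + 1 := by linarith
  have hs : 0 < 1 / (b ^ α + 1) := by positivity
  refine ⟨fun ρ ⟨γ, hγ⟩ => ⟨b • γ + γ, Alg.P_conv_T_self hb0.ne' hpow hγ⟩, fun μ γ' hγ' => ?_⟩
  rw [Alg.T_P_conv_P hb0.ne' hs, Alg.T_conv_self_of_shift hb0.ne' (by linarith) hpow hγ',
    Alg.P_mul _ _ hs hpow1, one_div_mul_cancel hpow1.ne', Alg.P_one]

/-- Example 4.5 of the paper.  Let `b > 1`, `0 < α ≤ 2`, and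
`𝔖_α(b) = {ρ : P_{b^α}ρ = T_bρ * δ_γ for some γ}`.  With `Φρ = T_bρ * ρ`, `Φ` maps
`𝔖_α(b)` onto `𝔖_α(b)`: `Φρ ∈ 𝔖_α(b)` for `ρ ∈ 𝔖_α(b)`, and every `μ ∈ 𝔖_α(b)` with
`P_{b^α}μ = T_bμ * δ_{γ'}` satisfies `μ = Φρ` for `ρ = P_{1/(b^α+1)}(μ * δ_{γ'/(b+1)})`. -/
theorem stmt14 (E : Type*) [AddCommGroup E] [Module ℝ E] (Alg : IDAlg E)
    (b α : ℝ) (hb : 1 < b) (hα : 0 < α) (hα2 : α ≤ 2) :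
    (∀ ρ, (∃ γ, Alg.P (b ^ α) ρ = Alg.conv (Alg.T b ρ) (Alg.delta γ)) →
      ∃ γ, Alg.P (b ^ α) (Alg.conv (Alg.T b ρ) ρ)
        = Alg.conv (Alg.T b (Alg.conv (Alg.T b ρ) ρ)) (Alg.delta γ)) ∧
    (∀ μ γ', Alg.P (b ^ α) μ = Alg.conv (Alg.T b μ) (Alg.delta γ') →
      Alg.conv
          (Alg.T b (Alg.P (1 / (b ^ α + 1)) (Alg.conv μ (Alg.delta ((1 / (b + 1)) • γ')))))
          (Alg.P (1 / (b ^ α + 1)) (Alg.conv μ (Alg.delta ((1 / (b + 1)) • γ')))) = μ) :=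
  stmt14_general E Alg b α hb
end

section
/- Let Φ_h : ID → ID be a map that is injective and commutes with T_{-1} (Φ_h T_{-1} = T_{-1} Φ_h), and define Φ_f ρ = Φ_h(ρ * T_{-1}ρ). Then for every n ≥ 1, the range of Φ_f^n equals the intersection of the range of Φ_h^n (composed with P_{2^n}) with the symmetric distributions: Range(Φ_f^n) = Range(Φ_h^n) ∩ ID_sym, assuming additionally Φ_h commutes with every P_t and Range(Φ_h^n) is closed under P_t for all t > 0. -/
/-!
With `U ρ = ρ * T₋₁ρ`, which is always symmetric and equals `P₂ ρ` when `ρ` is, the commutation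
of `Φ_h` with `T₋₁` and with the `P_t` gives `Φ_f^{k+1} = Φ_h^{k+1} ∘ P_{2^k} ∘ U`. Hence every
`Φ_f^n ρ` is a symmetric element of `Range(Φ_h^n)`. Conversely, if `Φ_h^n σ` is symmetric then so
is `σ`, by injectivity, and `ρ = P_{2^{-n}} σ` satisfies `P_{2^{n-1}} (U ρ) = σ`.
-/

namespace IDAlg

variable {E : Type*} [AddCommGroup E] [Module ℝ E] (A : IDAlg E)

def symmetrize (ρ : A.X) : A.X := A.conv ρ (A.T (-1) ρ)

theorem T_neg_one_T_neg_one (μ : A.X) : A.T (-1) (A.T (-1) μ) = μ := by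
  rw [A.T_mul (-1) (-1) (by norm_num) (by norm_num), neg_one_mul, neg_neg, A.T_one]

theorem T_neg_one_symmetrize (ρ : A.X) : A.T (-1) (A.symmetrize ρ) = A.symmetrize ρ := by
  rw [symmetrize, A.T_conv (-1) (by norm_num), T_neg_one_T_neg_one, A.conv_comm]

theorem conv_self (μ : A.X) : A.conv μ μ = A.P 2 μ := by
  simpa only [A.P_one, one_add_one_eq_two] using A.P_add 1 1 one_pos one_pos μ

theorem symmetrize_of_T_neg_one_eq {μ : A.X} (hμ : A.T (-1) μ = μ) :
    A.symmetrize μ = A.P 2 μ := by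
  rw [symmetrize, hμ, conv_self]

theorem P_P_inv {t : ℝ} (ht : 0 < t) (μ : A.X) : A.P t (A.P t⁻¹ μ) = μ := by
  rw [A.P_mul _ _ ht (inv_pos.2 ht), mul_inv_cancel₀ ht.ne', A.P_one]

variable {A} {Φ : A.X → A.X}

theorem T_neg_one_iterate_P_symmetrize (hT : Function.Commute Φ (A.T (-1))) (k : ℕ) {t : ℝ}
    (ht : 0 < t) (ρ : A.X) :
    A.T (-1) (Φ^[k] (A.P t (A.symmetrize ρ))) = Φ^[k] (A.P t (A.symmetrize ρ)) := by
  rw [← (hT.iterate_left k).eq, A.T_P (-1) t (by norm_num) ht, T_neg_one_symmetrize]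

theorem iterate_comp_symmetrize (hT : Function.Commute Φ (A.T (-1)))
    (hP : ∀ t : ℝ, 0 < t → Function.Commute Φ (A.P t)) (k : ℕ) (ρ : A.X) :
    (Φ ∘ A.symmetrize)^[k + 1] ρ = Φ^[k + 1] (A.P (2 ^ k) (A.symmetrize ρ)) := by
  induction k with
  | zero => rw [pow_zero, A.P_one]; rfl
  | succ k ih =>
    have h2k : (0 : ℝ) < 2 ^ k := by positivity
    rw [Function.iterate_succ_apply', ih, Function.comp_apply,
      A.symmetrize_of_T_neg_one_eq (T_neg_one_iterate_P_symmetrize hT _ h2k ρ),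
      ← ((hP 2 two_pos).iterate_left _).eq, ← Function.iterate_succ_apply' Φ,
      A.P_mul 2 _ two_pos h2k, ← pow_succ']

end IDAlg

theorem stmt16_general (E : Type*) [AddCommGroup E] [Module ℝ E] (Alg : IDAlg E)
    (Φh : Alg.X → Alg.X) (hinj : Function.Injective Φh)
    (hT : ∀ ρ, Φh (Alg.T (-1) ρ) = Alg.T (-1) (Φh ρ))
    (hP : ∀ t : ℝ, 0 < t → ∀ ρ, Φh (Alg.P t ρ) = Alg.P t (Φh ρ))
    (n : ℕ) (hn : 1 ≤ n) :
    Set.range ((fun ρ => Φh (Alg.conv ρ (Alg.T (-1) ρ)))^[n])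
      = Set.range (Φh^[n]) ∩ {μ | Alg.T (-1) μ = μ} := by
  obtain ⟨m, rfl⟩ := Nat.exists_eq_add_of_le' hn
  change Set.range ((Φh ∘ Alg.symmetrize)^[m + 1]) = _
  have h2m : (0 : ℝ) < 2 ^ m := by positivity
  ext μ
  constructor
  · rintro ⟨ρ, rfl⟩
    rw [IDAlg.iterate_comp_symmetrize hT hP]
    exact ⟨⟨_, rfl⟩, IDAlg.T_neg_one_iterate_P_symmetrize hT _ h2m ρ⟩
  · rintro ⟨⟨σ, rfl⟩, hsym : Alg.T (-1) _ = _⟩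
    have hσ : Alg.T (-1) σ = σ := hinj.iterate (m + 1) <| by
      rwa [← (Function.Commute.iterate_left hT (m + 1)).eq] at hsym
    refine ⟨Alg.P (2 ^ (m + 1))⁻¹ σ, ?_⟩
    have h2m1 : (0 : ℝ) < 2 ^ (m + 1) := by positivity
    rw [IDAlg.iterate_comp_symmetrize hT hP, Alg.symmetrize_of_T_neg_one_eq
        (by rw [Alg.T_P (-1) _ (by norm_num) (inv_pos.2 h2m1), hσ]),
      Alg.P_mul _ _ h2m two_pos, ← pow_succ, Alg.P_P_inv h2m1]

/-- Example 4.3/4.4 pattern of the paper.  Suppose `Φ_h : ID → ID` is injective, commutes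
with `T_{-1}` and with every `P_t` (`t > 0`), and set `Φ_f ρ = Φ_h(ρ * T_{-1}ρ)`.  If the
range of `Φ_h^n` is closed under every `P_t`, then for every `n ≥ 1`,
`Range(Φ_f^n) = Range(Φ_h^n) ∩ ID_sym`. -/
theorem stmt16 (E : Type*) [AddCommGroup E] [Module ℝ E] (Alg : IDAlg E)
    (Φh : Alg.X → Alg.X) (hinj : Function.Injective Φh)
    (hT : ∀ ρ, Φh (Alg.T (-1) ρ) = Alg.T (-1) (Φh ρ))
    (hP : ∀ t : ℝ, 0 < t → ∀ ρ, Φh (Alg.P t ρ) = Alg.P t (Φh ρ))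
    (n : ℕ) (hn : 1 ≤ n)
    (hclosed : ∀ t : ℝ, 0 < t → ∀ μ ∈ Set.range (Φh^[n]), Alg.P t μ ∈ Set.range (Φh^[n])) :
    Set.range ((fun ρ => Φh (Alg.conv ρ (Alg.T (-1) ρ)))^[n])
      = Set.range (Φh^[n]) ∩ {μ | Alg.T (-1) μ = μ} :=
  stmt16_general E Alg Φh hinj hT hP n hn
end
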